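/- arXiv:1107.0500 — 2 statements merged into one kernel-verified Lean document; each statement's English description precedes it below -/
import Mathlib

section
/- Every Hermitian self-dual 2N×2N complex matrix X has the form X = U · [[D, 0], [0, D]] · U* for some symplectic unitary U and real diagonal N×N matrix D; in particular every eigenvalue of X has even multiplicity (Kramers degeneracy). -/
/-!
For Hermitian `X`, self-duality makes the antiunitary map `T ξ = -Z ξ̄` (`Tmap`, with `T² = -1`)
commute with `X`, so `T` sends an eigenvector to an eigenvector with the same real eigenvalue,
orthogonal to it since `⟪ξ, T ξ⟫ = 0`. Repeatedly taking a unit eigenvector orthogonal to the span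
of the previous `vᵢ, T vᵢ` (a span whose complement is `X`- and `T`-invariant) gives `N` vectors
such that `v₁, …, v_N, T v₁, …, T v_N` are the columns of a unitary `U` with `Z U = Ū Z`, i.e. a
symplectic one, and `U* X U = diag(D, D)`. Then the characteristic polynomial of `X` is a square,
and as `X` is diagonalizable its geometric multiplicities are the algebraic ones, hence even.
-/

open Matrix

noncomputable def Zmat (N : ℕ) : Matrix (Fin N ⊕ Fin N) (Fin N ⊕ Fin N) ℂ :=
  Matrix.fromBlocks 0 1 (-1) 0

noncomputable def dual {N : ℕ} (X : Matrix (Fin N ⊕ Fin N) (Fin N ⊕ Fin N) ℂ) :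
    Matrix (Fin N ⊕ Fin N) (Fin N ⊕ Fin N) ℂ :=
  -(Zmat N) * Xᵀ * (Zmat N)

noncomputable def Tmap {N : ℕ} (ξ : Fin N ⊕ Fin N → ℂ) : Fin N ⊕ Fin N → ℂ :=
  Sum.elim (fun i => -(starRingEnd ℂ) (ξ (Sum.inr i))) (fun i => (starRingEnd ℂ) (ξ (Sum.inl i)))

open scoped InnerProductSpace
open Module

theorem Orthonormal.finCons {𝕜 E : Type*} [RCLike 𝕜] [NormedAddCommGroup E] [InnerProductSpace 𝕜 E]
    {k : ℕ} {v : Fin k → E} (hv : Orthonormal 𝕜 v) {u : E} (hu : ‖u‖ = 1)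
    (huv : ∀ i, ⟪u, v i⟫_𝕜 = 0) : Orthonormal 𝕜 (Fin.cons u v : Fin (k + 1) → E) := by
  refine ⟨Fin.cases hu hv.1, fun i j hij => ?_⟩
  cases i using Fin.cases <;> cases j using Fin.cases
  · exact absurd rfl hij
  · exact huv _
  · rw [Fin.cons_zero, Fin.cons_succ, ← inner_conj_symm, huv, map_zero]
  · exact hv.2 (fun h => hij (congrArg Fin.succ h))

theorem LinearMap.IsSymmetric.exists_unit_eigenvector_mem {𝕜 E : Type*} [RCLike 𝕜]
    [NormedAddCommGroup E] [InnerProductSpace 𝕜 E] [FiniteDimensional 𝕜 E] {A : E →ₗ[𝕜] E}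
    (hA : A.IsSymmetric) {W : Submodule 𝕜 E} (hW : ∀ x ∈ W, A x ∈ W) (hW0 : W ≠ ⊥) :
    ∃ u ∈ W, ‖u‖ = 1 ∧ ∃ r : ℝ, A u = (r : 𝕜) • u := by
  have : Nontrivial W := Submodule.nontrivial_iff_ne_bot.mpr hW0
  have hn : 0 < finrank 𝕜 W := finrank_pos
  have hB := hA.restrict_invariant hW
  let i : Fin (finrank 𝕜 W) := ⟨0, hn⟩
  exact ⟨hB.eigenvectorBasis rfl i, (hB.eigenvectorBasis rfl i).2,
    (hB.eigenvectorBasis rfl).orthonormal.1 i, hB.eigenvalues rfl i,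
    congrArg Subtype.val (hB.apply_eigenvectorBasis rfl i)⟩

section Quaternionic

variable {E : Type*} [NormedAddCommGroup E] [InnerProductSpace ℂ E]

structure IsQuaternionicStructure (J : E →ₗ⋆[ℂ] E) : Prop where
  apply_apply : ∀ x, J (J x) = -x
  inner_apply_apply : ∀ x y, ⟪J x, J y⟫_ℂ = ⟪y, x⟫_ℂ

namespace IsQuaternionicStructure

variable {J : E →ₗ⋆[ℂ] E}

theorem inner_self_apply (hJ : IsQuaternionicStructure J) (x : E) : ⟪x, J x⟫_ℂ = 0 := by
  have h := hJ.inner_apply_apply (J x) x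
  rw [hJ.apply_apply, inner_neg_left] at h
  linear_combination -h / 2

theorem apply_mem_orthogonal (hJ : IsQuaternionicStructure J) {S : Submodule ℂ E}
    (hS : ∀ x ∈ S, J x ∈ S) {x : E} (hx : x ∈ Sᗮ) : J x ∈ Sᗮ := by
  intro y hy
  rw [← hJ.inner_apply_apply, hJ.apply_apply, inner_neg_left, ← inner_conj_symm, hx _ (hS y hy),
    map_zero, neg_zero]

theorem orthonormal_sumElim (hJ : IsQuaternionicStructure J) {ι : Type*} {v : ι → E}
    (hv : Orthonormal ℂ v) (hvJ : ∀ i j, ⟪v i, J (v j)⟫_ℂ = 0) :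
    Orthonormal ℂ (Sum.elim v (J ∘ v)) := by
  classical
  rw [orthonormal_iff_ite] at hv ⊢
  rintro (i | i) (j | j)
  · simpa using hv i j
  · simpa using hvJ i j
  · rw [Sum.elim_inr, Sum.elim_inl, Function.comp_apply, ← inner_conj_symm, hvJ j i]
    simp
  · rw [Sum.elim_inr, Sum.elim_inr, Function.comp_apply, Function.comp_apply,
      hJ.inner_apply_apply, hv j i]
    simp only [Sum.inr.injEq]
    exact if_congr eq_comm rfl rfl

theorem exists_unit_eigenvector_orthogonal [FiniteDimensional ℂ E]
    (hJ : IsQuaternionicStructure J) {A : E →ₗ[ℂ] E} (hA : A.IsSymmetric) {S : Submodule ℂ E}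
    (hSA : S ≤ S.comap A) (hSJ : S ≤ S.comap J) (hS : S ≠ ⊤) :
    ∃ u ∈ Sᗮ, J u ∈ Sᗮ ∧ ‖u‖ = 1 ∧ ∃ r : ℝ, A u = (r : ℂ) • u := by
  obtain ⟨u, huS, hu⟩ := hA.exists_unit_eigenvector_mem
    (hA.orthogonalComplement_mem_invtSubmodule hSA) (Submodule.orthogonal_eq_bot_iff.not.2 hS)
  exact ⟨u, huS, hJ.apply_mem_orthogonal hSJ huS, hu⟩

end IsQuaternionicStructure

theorem exists_orthonormal_eigenvectors_of_isQuaternionicStructure [FiniteDimensional ℂ E]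
    {A : E →ₗ[ℂ] E} (hA : A.IsSymmetric) {J : E →ₗ⋆[ℂ] E} (hJ : IsQuaternionicStructure J)
    (hAJ : ∀ x, A (J x) = J (A x)) (k : ℕ) (hk : 2 * k ≤ finrank ℂ E) :
    ∃ (v : Fin k → E) (d : Fin k → ℝ), (∀ i, A (v i) = (d i : ℂ) • v i) ∧
      Orthonormal ℂ v ∧ ∀ i j, ⟪v i, J (v j)⟫_ℂ = 0 := by
  induction k with
  | zero => exact ⟨Fin.elim0, Fin.elim0, nofun, ⟨nofun, nofun⟩, nofun⟩
  | succ k ih =>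
    obtain ⟨v, d, hvd, hv, hvJ⟩ := ih (by omega)
    set S := Submodule.span ℂ (Set.range (Sum.elim v (J ∘ v)))
    have hvS (i : Fin k) : v i ∈ S := Submodule.subset_span ⟨.inl i, rfl⟩
    have hJvS (i : Fin k) : J (v i) ∈ S := Submodule.subset_span ⟨.inr i, rfl⟩
    have hSJ : S ≤ S.comap J := by
      refine Submodule.span_le.2 (Set.range_subset_iff.2 ?_)
      rintro (i | i)
      · exact hJvS i
      · simpa [hJ.apply_apply] using S.neg_mem (hvS i)
    have hSA : S ≤ S.comap A := by
      refine Submodule.span_le.2 (Set.range_subset_iff.2 ?_)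
      rintro (i | i)
      · change A (v i) ∈ S
        rw [hvd]
        exact S.smul_mem _ (hvS i)
      · change A (J (v i)) ∈ S
        rw [hAJ, hvd, map_smulₛₗ]
        exact S.smul_mem _ (hJvS i)
    have hS : S ≠ ⊤ := by
      intro h
      have hSk : finrank ℂ S ≤ 2 * k := by
        have := finrank_range_le_card (R := ℂ) (Sum.elim v (J ∘ v))
        rwa [Fintype.card_sum, Fintype.card_fin, ← two_mul] at this
      rw [h, finrank_top] at hSk
      omega
    obtain ⟨u, huS, hJuS, hu, r, hur⟩ := hJ.exists_unit_eigenvector_orthogonal hA hSA hSJ hS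
    refine ⟨Fin.cons u v, Fin.cons r d, Fin.cases hur hvd,
      hv.finCons hu fun i => Submodule.inner_left_of_mem_orthogonal (hvS i) huS, ?_⟩
    intro i j
    cases i using Fin.cases <;> cases j using Fin.cases
    · exact hJ.inner_self_apply u
    · exact Submodule.inner_left_of_mem_orthogonal (hJvS _) huS
    · exact Submodule.inner_right_of_mem_orthogonal (hvS _) hJuS
    · exact hvJ _ _

end Quaternionic

theorem Matrix.IsHermitian.finrank_eigenspace_eq_rootMultiplicity {𝕜 n : Type*} [RCLike 𝕜]
    [Fintype n] [DecidableEq n] {A : Matrix n n 𝕜} (hA : A.IsHermitian) (μ : 𝕜) :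
    finrank 𝕜 (Module.End.eigenspace (toLin' A) μ) = A.charpoly.rootMultiplicity μ := by
  have hss : Module.End.IsFinitelySemisimple (toLin' A) := by
    rw [Module.End.isFinitelySemisimple_iff_isSemisimple,
      ← LinearEquiv.isSemisimple_iff (toEuclideanLin A) _ (WithLp.linearEquiv 2 𝕜 (n → 𝕜)) rfl,
      ← Module.End.isFinitelySemisimple_iff_isSemisimple]
    exact (isSymmetric_toEuclideanLin_iff.2 hA).isFinitelySemisimple
  rw [← hss.maxGenEigenspace_eq_eigenspace, LinearMap.finrank_maxGenEigenspace_eq,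
    Matrix.charpoly_toLin']

theorem Matrix.charpoly_mul_mul_star_of_mem_unitaryGroup {𝕜 n : Type*} [RCLike 𝕜] [Fintype n]
    [DecidableEq n] {U : Matrix n n 𝕜} (hU : U ∈ unitaryGroup n 𝕜) (M : Matrix n n 𝕜) :
    (U * M * star U).charpoly = M.charpoly := by
  rw [charpoly_mul_comm, ← Matrix.mul_assoc, Unitary.star_mul_self_of_mem hU, Matrix.one_mul]

theorem Matrix.even_rootMultiplicity_charpoly_fromBlocks_self {R n : Type*} [CommRing R]
    [IsDomain R] [Fintype n] [DecidableEq n] (B : Matrix n n R) (μ : R) :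
    Even ((fromBlocks B 0 0 B).charpoly.rootMultiplicity μ) := by
  rw [charpoly_fromBlocks_zero₁₂, Polynomial.rootMultiplicity_mul
    (B.charpoly_monic.mul B.charpoly_monic).ne_zero]
  exact ⟨_, rfl⟩

section SelfDual

variable {N : ℕ}

theorem Zmat_mul_Zmat : Zmat N * Zmat N = -1 := by
  simp [Zmat, fromBlocks_multiply, ← fromBlocks_one, fromBlocks_neg]

theorem Tmap_eq_neg_Zmat_mulVec_star (ξ : Fin N ⊕ Fin N → ℂ) : Tmap ξ = -(Zmat N *ᵥ star ξ) := by
  ext (i | i) <;> simp [Tmap, Zmat, fromBlocks_mulVec, neg_mulVec]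

theorem mul_Zmat_of_dual_eq_self {X : Matrix (Fin N ⊕ Fin N) (Fin N ⊕ Fin N) ℂ} (hX : dual X = X) :
    X * Zmat N = Zmat N * Xᵀ := by
  conv_lhs => rw [← hX]
  rw [dual, Matrix.mul_assoc, Zmat_mul_Zmat]
  simp

theorem mulVec_Tmap {X : Matrix (Fin N ⊕ Fin N) (Fin N ⊕ Fin N) ℂ} (hherm : Xᴴ = X)
    (hsd : dual X = X) (ξ : Fin N ⊕ Fin N → ℂ) : X *ᵥ Tmap ξ = Tmap (X *ᵥ ξ) := by
  have hXt : Xᵀ = X.map star := by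
    ext i j
    simpa using (congrFun (congrFun hherm j) i).symm
  rw [Tmap_eq_neg_Zmat_mulVec_star, Tmap_eq_neg_Zmat_mulVec_star, mulVec_neg, mulVec_mulVec,
    mul_Zmat_of_dual_eq_self hsd, ← mulVec_mulVec, hXt]
  congr 2
  ext i
  exact (RingHom.map_mulVec (starRingEnd ℂ) X ξ i).symm

noncomputable def timeReversal (N : ℕ) :
    EuclideanSpace ℂ (Fin N ⊕ Fin N) →ₗ⋆[ℂ] EuclideanSpace ℂ (Fin N ⊕ Fin N) where
  toFun x := WithLp.toLp 2 (Tmap x)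
  map_add' x y := by ext (i | i) <;> simp [Tmap, add_comm]
  map_smul' a x := by ext (i | i) <;> simp [Tmap]

theorem timeReversal_apply (x : EuclideanSpace ℂ (Fin N ⊕ Fin N)) :
    timeReversal N x = WithLp.toLp 2 (Tmap x) := rfl

theorem isQuaternionicStructure_timeReversal : IsQuaternionicStructure (timeReversal N) where
  apply_apply x := by ext (i | i) <;> simp [timeReversal_apply, Tmap]
  inner_apply_apply x y := by
    simp only [PiLp.inner_apply, Fintype.sum_sum_type, timeReversal_apply, Tmap]
    simp [mul_comm, add_comm]

theorem toEuclideanLin_timeReversal {X : Matrix (Fin N ⊕ Fin N) (Fin N ⊕ Fin N) ℂ}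
    (hherm : Xᴴ = X) (hsd : dual X = X) (x : EuclideanSpace ℂ (Fin N ⊕ Fin N)) :
    toEuclideanLin X (timeReversal N x) = timeReversal N (toEuclideanLin X x) :=
  congrArg (WithLp.toLp 2) (mulVec_Tmap hherm hsd x)

theorem transpose_mul_Zmat_mul_of_mem_unitaryGroup {U : Matrix (Fin N ⊕ Fin N) (Fin N ⊕ Fin N) ℂ}
    (hU : U ∈ unitaryGroup (Fin N ⊕ Fin N) ℂ) (hZU : Zmat N * U = U.map star * Zmat N) :
    Uᵀ * Zmat N * U = Zmat N := by
  have hUU : Uᵀ * U.map star = 1 := by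
    simpa [star_eq_conjTranspose, conjTranspose, transpose_map] using
      congrArg transpose (Unitary.star_mul_self_of_mem hU)
  rw [Matrix.mul_assoc, hZU, ← Matrix.mul_assoc, hUU, Matrix.one_mul]

theorem Zmat_mul_of_sumElim_timeReversal (v : Fin N → EuclideanSpace ℂ (Fin N ⊕ Fin N)) :
    Zmat N * Matrix.of (fun p q => Sum.elim v (timeReversal N ∘ v) q p) =
      (Matrix.of fun p q => Sum.elim v (timeReversal N ∘ v) q p).map star * Zmat N := by
  ext (i | i) (j | j) <;>
    simp [Zmat, fromBlocks, mul_apply, Fintype.sum_sum_type, timeReversal_apply, Tmap, one_apply]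

theorem exists_symplectic_unitary_diagonalization {X : Matrix (Fin N ⊕ Fin N) (Fin N ⊕ Fin N) ℂ}
    (hherm : Xᴴ = X) (hsd : dual X = X) :
    ∃ (U : Matrix (Fin N ⊕ Fin N) (Fin N ⊕ Fin N) ℂ) (D : Matrix (Fin N) (Fin N) ℝ),
      U ∈ unitaryGroup (Fin N ⊕ Fin N) ℂ ∧ Uᵀ * Zmat N * U = Zmat N ∧ D.IsDiag ∧
      X = U * fromBlocks (D.map Complex.ofReal) 0 0 (D.map Complex.ofReal) * Uᴴ := by
  have hJ := isQuaternionicStructure_timeReversal (N := N)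
  obtain ⟨v, d, hvd, hv, hvJ⟩ := exists_orthonormal_eigenvectors_of_isQuaternionicStructure
    (isSymmetric_toEuclideanLin_iff.2 hherm) hJ (toEuclideanLin_timeReversal hherm hsd) N
    (by simp [two_mul])
  set b := Sum.elim v (timeReversal N ∘ v)
  have hb : Orthonormal ℂ b := hJ.orthonormal_sumElim hv hvJ
  let B := OrthonormalBasis.mk hb (hb.linearIndependent.span_eq_top_of_card_eq_finrank'
    (by simp)).ge
  set U := (EuclideanSpace.basisFun _ ℂ).toBasis.toMatrix B
  have hUb : U = Matrix.of fun p q => b q p := by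
    ext p q
    simp [U, B, Module.Basis.toMatrix_apply]
  have hU : U ∈ unitaryGroup _ ℂ := OrthonormalBasis.toMatrix_orthonormalBasis_mem_unitary _ B
  set dd : Fin N ⊕ Fin N → ℂ := Sum.elim (fun i => (d i : ℂ)) (fun i => (d i : ℂ))
  have hbd (q) : toEuclideanLin X (b q) = dd q • b q := by
    rcases q with i | i
    · exact hvd i
    · change toEuclideanLin X (timeReversal N (v i)) = (d i : ℂ) • timeReversal N (v i)
      rw [toEuclideanLin_timeReversal hherm hsd, hvd, map_smulₛₗ, Complex.conj_ofReal]
  have hXU : X * U = U * diagonal dd := by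
    ext p q
    rw [mul_diagonal, mul_comm (U p q)]
    simpa [hUb, mul_apply, mulVec, dotProduct] using congrArg (· p) (hbd q)
  refine ⟨U, diagonal d, hU, transpose_mul_Zmat_mul_of_mem_unitaryGroup hU
    (hUb ▸ Zmat_mul_of_sumElim_timeReversal v), isDiag_diagonal d, ?_⟩
  rw [diagonal_map Complex.ofReal_zero, fromBlocks_diagonal]
  calc X = X * (U * star U) := by rw [Unitary.mul_star_self_of_mem hU, Matrix.mul_one]
    _ = U * diagonal dd * Uᴴ := by rw [← Matrix.mul_assoc, hXU]; rfl

end SelfDual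

theorem hermitian_self_dual_diagonalization {N : ℕ}
    (X : Matrix (Fin N ⊕ Fin N) (Fin N ⊕ Fin N) ℂ) (hherm : Xᴴ = X) (hsd : dual X = X) :
    (∃ (U : Matrix (Fin N ⊕ Fin N) (Fin N ⊕ Fin N) ℂ) (D : Matrix (Fin N) (Fin N) ℝ),
      U ∈ Matrix.unitaryGroup (Fin N ⊕ Fin N) ℂ ∧
      Uᵀ * Zmat N * U = Zmat N ∧
      D.IsDiag ∧
      X = U * Matrix.fromBlocks (D.map Complex.ofReal) 0 0 (D.map Complex.ofReal) * Uᴴ) ∧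
    ∀ μ : ℂ, Even (Module.finrank ℂ (Module.End.eigenspace (Matrix.toLin' X) μ)) := by
  obtain ⟨U, D, hU, hsymp, hD, hX⟩ := exists_symplectic_unitary_diagonalization hherm hsd
  refine ⟨⟨U, D, hU, hsymp, hD, hX⟩, fun μ => ?_⟩
  rw [IsHermitian.finrank_eigenspace_eq_rootMultiplicity hherm, hX, ← star_eq_conjTranspose,
    charpoly_mul_mul_star_of_mem_unitaryGroup hU]
  exact even_rootMultiplicity_charpoly_fromBlocks_self _ μ
end

section
/- If v and w are orthogonal unit vectors in ℂ^{2N}, then the matrix V = (𝒯v)w* - (𝒯w)v* is a self-dual partial isometry of rank two sending w to 𝒯v and v to -𝒯w. -/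
/-!
Write V = X Yᴴ, where X has the columns 𝒯v, -𝒯w and Y the columns w, v. Since 𝒯 is antiunitary,
both pairs of columns are orthonormal, i.e. XᴴX = YᴴY = 1; this gives V Vᴴ V = V and rank V = 2.
For self-duality, 𝒯ξ = -Z ξ̄ and Zᵀ = -Z show that the dual of (𝒯ξ)η* is -(𝒯η)ξ*, so the dual
map exchanges the two rank-one terms of V together with their signs.
-/

open Matrix

namespace Matrix

variable {m ι R : Type*}

def IsPartialIsometry [Fintype m] [Fintype ι] [Semiring R] [StarRing R] (V : Matrix m ι R) :
    Prop :=
  V * Vᴴ * V = V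

theorem mul_conjTranspose_pair [CommSemiring R] [StarRing R] (a b c d : m → R) :
    (of ![a, b])ᵀ * (of ![c, d])ᵀᴴ = vecMulVec a (star c) + vecMulVec b (star d) := by
  ext i j
  simp [mul_apply, vecMulVec_apply, Fin.sum_univ_two]

variable [Fintype m]

theorem conjTranspose_mul_self_of_orthonormal_pair [CommSemiring R] [StarRing R]
    {a b : m → R} (ha : star a ⬝ᵥ a = 1) (hb : star b ⬝ᵥ b = 1) (hab : star a ⬝ᵥ b = 0) :
    (of ![a, b])ᵀᴴ * (of ![a, b])ᵀ = 1 := by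
  have hba : star b ⬝ᵥ a = 0 := by rw [star_dotProduct, hab, star_zero]
  ext i j
  fin_cases i <;> fin_cases j <;> simpa [mul_apply, dotProduct] using ‹_›

variable [Fintype ι] [DecidableEq ι]

theorem isPartialIsometry_mul_conjTranspose [CommSemiring R] [StarRing R] {X Y : Matrix m ι R}
    (hX : Xᴴ * X = 1) (hY : Yᴴ * Y = 1) : (X * Yᴴ).IsPartialIsometry := by
  rw [IsPartialIsometry, conjTranspose_mul, conjTranspose_conjTranspose]
  simp only [Matrix.mul_assoc]
  rw [← Matrix.mul_assoc Yᴴ Y, hY, Matrix.one_mul, ← Matrix.mul_assoc Xᴴ X, hX, Matrix.one_mul]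

theorem rank_mul_conjTranspose_of_isometry [Field R] [StarRing R] {X Y : Matrix m ι R}
    (hX : Xᴴ * X = 1) (hY : Yᴴ * Y = 1) : (X * Yᴴ).rank = Fintype.card ι := by
  refine le_antisymm ((rank_mul_le_left X Yᴴ).trans X.rank_le_card_width) ?_
  calc Fintype.card ι = (Xᴴ * (X * Yᴴ) * Y).rank := by
        rw [← Matrix.mul_assoc, hX, Matrix.one_mul, hY, rank_one]
    _ ≤ (X * Yᴴ).rank := (rank_mul_le_left _ Y).trans (rank_mul_le_right _ _)

end Matrix

theorem EuclideanSpace.star_dotProduct_self_of_norm_eq_one {𝕜 ι : Type*} [RCLike 𝕜] [Fintype ι]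
    {x : EuclideanSpace 𝕜 ι} (hx : ‖x‖ = 1) : star x.ofLp ⬝ᵥ x.ofLp = 1 := by
  rw [dotProduct_comm, ← EuclideanSpace.inner_eq_star_dotProduct, inner_self_eq_norm_sq_to_K, hx]
  simp

section Kramers

variable {N : ℕ}

theorem star_Tmap_dotProduct_Tmap (ξ η : Fin N ⊕ Fin N → ℂ) :
    star (Tmap ξ) ⬝ᵥ Tmap η = star η ⬝ᵥ ξ := by
  simp only [dotProduct, Fintype.sum_sum_type, Tmap, Sum.elim_inl, Sum.elim_inr, Pi.star_apply,
    RCLike.star_def, map_neg, starRingEnd_self_apply, neg_mul_neg, add_comm, mul_comm]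

theorem transpose_Zmat : (Zmat N)ᵀ = -Zmat N := by
  simp [Zmat, fromBlocks_transpose, fromBlocks_neg]

theorem Zmat_mulVec_star (ξ : Fin N ⊕ Fin N → ℂ) : Zmat N *ᵥ star ξ = -Tmap ξ := by
  ext (i | i) <;> simp [Zmat, Tmap, fromBlocks_mulVec, neg_mulVec]

theorem Zmat_mulVec_Tmap (ξ : Fin N ⊕ Fin N → ℂ) : Zmat N *ᵥ Tmap ξ = star ξ := by
  ext (i | i) <;> simp [Zmat, Tmap, fromBlocks_mulVec, neg_mulVec]

theorem dual_vecMulVec (a b : Fin N ⊕ Fin N → ℂ) :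
    dual (vecMulVec a b) = vecMulVec (Zmat N *ᵥ b) (Zmat N *ᵥ a) := by
  rw [dual, transpose_vecMulVec, Matrix.neg_mul, mul_vecMulVec, Matrix.neg_mul, vecMulVec_mul,
    ← mulVec_transpose, transpose_Zmat, neg_mulVec, vecMulVec_neg, neg_neg]

theorem dual_vecMulVec_Tmap (ξ η : Fin N ⊕ Fin N → ℂ) :
    dual (vecMulVec (Tmap ξ) (star η)) = -vecMulVec (Tmap η) (star ξ) := by
  rw [dual_vecMulVec, Zmat_mulVec_star, Zmat_mulVec_Tmap, neg_vecMulVec]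

theorem dual_sub (X Y : Matrix (Fin N ⊕ Fin N) (Fin N ⊕ Fin N) ℂ) :
    dual (X - Y) = dual X - dual Y := by
  simp only [dual, transpose_sub, Matrix.mul_sub, Matrix.sub_mul]

end Kramers

theorem kramers_partial_isometry {N : ℕ} (v w : EuclideanSpace ℂ (Fin N ⊕ Fin N))
    (hv : ‖v‖ = 1) (hw : ‖w‖ = 1) (hvw : (inner ℂ v w : ℂ) = 0) :
    let V : Matrix (Fin N ⊕ Fin N) (Fin N ⊕ Fin N) ℂ :=
      Matrix.vecMulVec (Tmap v) (star w) - Matrix.vecMulVec (Tmap w) (star v)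
    dual V = V ∧ V * Vᴴ * V = V ∧ V.rank = 2 ∧
      V.mulVec w = Tmap v ∧ V.mulVec v = -(Tmap w) := by
  intro V
  have hvv := EuclideanSpace.star_dotProduct_self_of_norm_eq_one hv
  have hww := EuclideanSpace.star_dotProduct_self_of_norm_eq_one hw
  have hvw_dot : star v.ofLp ⬝ᵥ w.ofLp = 0 := by
    rwa [dotProduct_comm, ← EuclideanSpace.inner_eq_star_dotProduct]
  have hwv : star w.ofLp ⬝ᵥ v.ofLp = 0 := by rw [star_dotProduct, hvw_dot, star_zero]
  have hX : (of ![Tmap v.ofLp, -Tmap w.ofLp])ᵀᴴ * (of ![Tmap v.ofLp, -Tmap w.ofLp])ᵀ = 1 :=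
    conjTranspose_mul_self_of_orthonormal_pair (by rwa [star_Tmap_dotProduct_Tmap])
      (by simpa [star_Tmap_dotProduct_Tmap]) (by simpa [star_Tmap_dotProduct_Tmap])
  have hY := conjTranspose_mul_self_of_orthonormal_pair hww hvv hwv
  have hV : V = (of ![Tmap v.ofLp, -Tmap w.ofLp])ᵀ * (of ![w.ofLp, v.ofLp])ᵀᴴ := by
    rw [mul_conjTranspose_pair, neg_vecMulVec, ← sub_eq_add_neg]
  refine ⟨?_, hV ▸ isPartialIsometry_mul_conjTranspose hX hY, ?_, ?_, ?_⟩
  · rw [dual_sub, dual_vecMulVec_Tmap, dual_vecMulVec_Tmap, neg_sub_neg]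
  · rw [hV, rank_mul_conjTranspose_of_isometry hX hY, Fintype.card_fin]
  · simp [V, sub_mulVec, vecMulVec_mulVec, hww, hvw_dot]
  · simp [V, sub_mulVec, vecMulVec_mulVec, hvv, hwv]
end
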